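/- For every β ∈ [0,1], every improvement step of a β-altruist strictly decreases the function Φ_β(S) = (1−β)·Φ(S) + β·c(S) by exactly the improvement in her individual cost: if agent i changes from S_i to S'_i, then Φ_β(S) − Φ_β(S') = c_i(S) − c_i(S'), where Φ is the Rosenthal potential, c the social cost, and c_i = β·c + (1−β)·d_i. -/
import Mathlib


open Finset

def cong {N E : Type*} [Fintype N] [DecidableEq E] (S : N → Finset E) (e : E) : ℕ :=
  (Finset.univ.filter (fun i => e ∈ S i)).card

noncomputable def playerDelay {N E : Type*} [Fintype N] [DecidableEq E]
    (d : E → ℕ → ℝ) (S : N → Finset E) (i : N) : ℝ :=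
  ∑ e ∈ S i, d e (cong S e)

noncomputable def socialCost {N E : Type*} [Fintype N] [Fintype E] [DecidableEq E]
    (d : E → ℕ → ℝ) (S : N → Finset E) : ℝ :=
  ∑ e : E, (cong S e : ℝ) * d e (cong S e)

noncomputable def rosenthal {N E : Type*} [Fintype N] [Fintype E] [DecidableEq E]
    (d : E → ℕ → ℝ) (S : N → Finset E) : ℝ :=
  ∑ e : E, ∑ x ∈ Finset.Icc 1 (cong S e), d e x

/-- Individual cost of a β-altruist. -/
noncomputable def indivCost {N E : Type*} [Fintype N] [Fintype E] [DecidableEq E]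
    (d : E → ℕ → ℝ) (β : ℝ) (S : N → Finset E) (i : N) : ℝ :=
  β * socialCost d S + (1 - β) * playerDelay d S i

/-- Φ_β = (1−β)·Φ + β·c. -/
noncomputable def potBeta {N E : Type*} [Fintype N] [Fintype E] [DecidableEq E]
    (d : E → ℕ → ℝ) (β : ℝ) (S : N → Finset E) : ℝ :=
  (1 - β) * rosenthal d S + β * socialCost d S

lemma cong_update {N E : Type*} [Fintype N] [DecidableEq N] [DecidableEq E]
    (S : N → Finset E) (i : N) (T : Finset E) (e : E) :
    cong (Function.update S i T) e + (if e ∈ S i then 1 else 0)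
      = cong S e + (if e ∈ T then 1 else 0) := by
  classical
  unfold cong
  rw [Finset.card_filter, Finset.card_filter,
      ← Finset.sum_erase_add _ _ (Finset.mem_univ i),
      ← Finset.sum_erase_add _ _ (Finset.mem_univ i)]
  have h : ∀ j ∈ Finset.univ.erase i,
      (if e ∈ Function.update S i T j then 1 else 0) = (if e ∈ S j then 1 else 0) := by
    intro j hj
    rw [Function.update_of_ne (Finset.ne_of_mem_erase hj)]
  rw [Finset.sum_congr rfl h, Function.update_self]
  ring

lemma edge_diff {N E : Type*} [Fintype N] [DecidableEq N] [DecidableEq E]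
    (d : E → ℕ → ℝ) (S : N → Finset E) (i : N) (T : Finset E) (e : E) :
    (∑ x ∈ Finset.Icc 1 (cong S e), d e x)
      - (∑ x ∈ Finset.Icc 1 (cong (Function.update S i T) e), d e x)
      = (if e ∈ S i then d e (cong S e) else 0)
        - (if e ∈ T then d e (cong (Function.update S i T) e) else 0) := by
  have h := cong_update S i T e
  by_cases h1 : e ∈ S i <;> by_cases h2 : e ∈ T <;> simp [h1, h2] at h ⊢
  · rw [h]; ring
  · rw [← h, Finset.sum_Icc_succ_top (Nat.succ_le_succ (Nat.zero_le _))]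
    ring
  · rw [h, Finset.sum_Icc_succ_top (Nat.succ_le_succ (Nat.zero_le _))]
    norm_num
  · rw [h]; ring

lemma rosenthal_diff {N E : Type*} [Fintype N] [DecidableEq N] [Fintype E] [DecidableEq E]
    (d : E → ℕ → ℝ) (S : N → Finset E) (i : N) (T : Finset E) :
    rosenthal d S - rosenthal d (Function.update S i T)
      = playerDelay d S i - playerDelay d (Function.update S i T) i := by
  unfold rosenthal playerDelay
  rw [← Finset.sum_sub_distrib]
  rw [Finset.sum_congr rfl (fun e _ => edge_diff d S i T e)]
  rw [Finset.sum_sub_distrib, Finset.sum_ite_mem, Finset.sum_ite_mem,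
      Finset.univ_inter, Finset.univ_inter, Function.update_self]

/-- for every β ∈ [0,1], a unilateral change of a β-altruist
changes Φ_β exactly by the change of her individual cost:
Φ_β(S) − Φ_β(S') = cᵢ(S) − cᵢ(S'). -/
theorem potBeta_exact {N E : Type*} [Fintype N] [DecidableEq N]
    [Fintype E] [DecidableEq E]
    (d : E → ℕ → ℝ) (β : ℝ) (hβ : β ∈ Set.Icc (0 : ℝ) 1)
    (S : N → Finset E) (i : N) (T : Finset E) :
    potBeta d β S - potBeta d β (Function.update S i T) =
      indivCost d β S i - indivCost d β (Function.update S i T) i := by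
  have h := rosenthal_diff d S i T
  unfold potBeta indivCost
  linear_combination (1 - β) * h
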